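/- If G belongs to the class T_h, then G contains a subdivision of a complete binary tree of height h as a subgraph. -/

import Mathlib

/-!
The induction runs on a rooted strengthening: for every vertex `u` of a graph in `𝒯_h` there is a
subdivided complete binary tree of height `h` with a path from `u` to its root meeting it only there.

For `G ∈ 𝒯_(h+1)` with parts `V₁, V₂, V₃`, a walk from `u` first enters `V₁ ∪ V₂ ∪ V₃` in one
part, say `V₁`. Continuing through the connected `V₁` and along the linking paths gives a walk from
`u` into `V₂` avoiding `V₃` and one into `V₃` avoiding `V₂`; cut them at their first entries `b`
and `c`, and let `z` be the vertex where they fork. Then `z` is the new root: the branches `z → b`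
and `z → c`, continued by the rooted trees that induction provides inside `V₂` from `b` and inside
`V₃` from `c`, are the two root edges, and the common part `u → z` is the new path to the root.
-/

open SimpleGraph

/-- A tree decomposition of a graph `G`. -/
structure TreeDecomp {V : Type} (G : SimpleGraph V) where
  ι : Type
  tree : SimpleGraph ι
  isTree : tree.IsTree
  bag : ι → Finset V
  covers : ∀ v : V, ∃ x, v ∈ bag x
  coversEdge : ∀ ⦃u v : V⦄, G.Adj u v → ∃ x, u ∈ bag x ∧ v ∈ bag x
  bagConn : ∀ v : V, (tree.induce {x | v ∈ bag x}).Connected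

/-- `G` has a tree decomposition of width at most `k` (bags of size at most `k+1`). -/
def TwLE {V : Type} (G : SimpleGraph V) (k : ℕ) : Prop :=
  ∃ D : TreeDecomp G, ∀ x, (D.bag x).card ≤ k + 1

/-- A path decomposition of a graph `G`: a sequence of bags. -/
structure PathDecomp {V : Type} (G : SimpleGraph V) where
  n : ℕ
  bag : Fin n → Finset V
  covers : ∀ v : V, ∃ i, v ∈ bag i
  coversEdge : ∀ ⦃u v : V⦄, G.Adj u v → ∃ i, u ∈ bag i ∧ v ∈ bag i
  consecutive : ∀ (v : V) (i j k : Fin n), i ≤ j → j ≤ k → v ∈ bag i → v ∈ bag k → v ∈ bag j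

/-- `G` has a path decomposition of width at most `k` (bags of size at most `k+1`). -/
def PwLE {V : Type} (G : SimpleGraph V) (k : ℕ) : Prop :=
  ∃ P : PathDecomp G, ∀ i, (P.bag i).card ≤ k + 1

/-- A copy of a subdivision of the tree `T` inside the graph `G`:
branch vertices `φ x`, and for each edge of `T` a path of `G` between the
corresponding branch vertices, internally disjoint from all branch vertices
and from the paths of all other edges. -/
structure SubdivCopy {α V : Type} (T : SimpleGraph α) (G : SimpleGraph V) where
  φ : α → V
  inj : Function.Injective φ
  path : ∀ ⦃x y : α⦄, T.Adj x y → G.Walk (φ x) (φ y)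
  isPath : ∀ ⦃x y : α⦄ (h : T.Adj x y), (path h).IsPath
  branch : ∀ ⦃x y : α⦄ (h : T.Adj x y) (z : α), φ z ∈ (path h).support → z = x ∨ z = y
  disj : ∀ ⦃x y x' y' : α⦄ (h : T.Adj x y) (h' : T.Adj x' y'),
    ({x, y} : Set α) ≠ {x', y'} →
    ∀ v, v ∈ (path h).support → v ∈ (path h').support →
      v ∈ φ '' (({x, y} : Set α) ∩ {x', y'})

/-- The set of vertices used by a subdivision copy. -/
def SubdivCopy.supp {α V : Type} {T : SimpleGraph α} {G : SimpleGraph V}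
    (c : SubdivCopy T G) : Set V :=
  Set.range c.φ ∪ {v | ∃ x y, ∃ h : T.Adj x y, v ∈ (c.path h).support}

/-- `G` contains a subdivision of `T` as a subgraph. -/
def ContainsSubdiv {α V : Type} (T : SimpleGraph α) (G : SimpleGraph V) : Prop :=
  Nonempty (SubdivCopy T G)

/-- `S` is (isomorphic to) a subdivision of `T`: a subdivision copy of `T`
using all vertices and all edges of `S`. -/
def IsSubdivisionOf {α W : Type} (T : SimpleGraph α) (S : SimpleGraph W) : Prop :=
  ∃ c : SubdivCopy T S, c.supp = Set.univ ∧
    ∀ ⦃u w : W⦄, S.Adj u w → ∃ x y, ∃ h : T.Adj x y, s(u, w) ∈ (c.path h).edges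

/-- The complete binary tree of height `h`, as a simple graph: vertices are
binary strings of length at most `h`, with edges between a string and its
one-letter extensions. -/
def CBT (h : ℕ) : SimpleGraph {l : List Bool // l.length ≤ h} :=
  SimpleGraph.fromRel (fun x y => ∃ b, y.val = b :: x.val)

/-- The root of the complete binary tree. -/
def CBTroot (h : ℕ) : {l : List Bool // l.length ≤ h} := ⟨[], by simp⟩

/-- The complete ternary tree of height `h`, as a simple graph. -/
def CTT (h : ℕ) : SimpleGraph {l : List (Fin 3) // l.length ≤ h} :=
  SimpleGraph.fromRel (fun x y => ∃ b, y.val = b :: x.val)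

/-- The root of the complete ternary tree. -/
def CTTroot (h : ℕ) : {l : List (Fin 3) // l.length ≤ h} := ⟨[], by simp⟩

/-- There are `a ∈ A` and `b ∈ B` joined by a walk of `G` avoiding `C`. -/
def LinkedAvoiding {V : Type} (G : SimpleGraph V) (A B C : Set V) : Prop :=
  ∃ a ∈ A, ∃ b ∈ B, ∃ p : G.Walk a b, ∀ x ∈ p.support, x ∉ C

/-- The classes `𝒯_h`: `InT 0 G` iff `G` is connected (hence non-empty);
`InT (h+1) G` iff `G` is connected and has three pairwise disjoint vertex sets
inducing graphs in `𝒯_h`, any two of which are linked by a path avoiding the third. -/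
def InTAux : ℕ → (V : Type) → SimpleGraph V → Prop
  | 0, _, G => G.Connected
  | h + 1, V, G => G.Connected ∧ ∃ V₁ V₂ V₃ : Set V,
      Disjoint V₁ V₂ ∧ Disjoint V₁ V₃ ∧ Disjoint V₂ V₃ ∧
      InTAux h V₁ (G.induce V₁) ∧ InTAux h V₂ (G.induce V₂) ∧ InTAux h V₃ (G.induce V₃) ∧
      LinkedAvoiding G V₁ V₂ V₃ ∧ LinkedAvoiding G V₁ V₃ V₂ ∧ LinkedAvoiding G V₂ V₃ V₁

def InT (h : ℕ) {V : Type} (G : SimpleGraph V) : Prop := InTAux h V G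

namespace SimpleGraph.Walk

variable {V : Type} {G : SimpleGraph V}

lemma IsPath.append {u v w : V} {p : G.Walk u v} {q : G.Walk v w} (hp : p.IsPath)
    (hq : q.IsPath) (hpq : ∀ x ∈ p.support, x ∈ q.support → x = v) :
    (p.append q).IsPath := by
  have hq' := hq.support_nodup
  rw [← cons_tail_support q, List.nodup_cons] at hq'
  rw [isPath_def, support_append, List.nodup_append]
  refine ⟨hp.support_nodup, hq'.2, fun x hx y hy hxy => ?_⟩
  subst hxy
  exact hq'.1 (hpq x hx (List.mem_of_mem_tail hy) ▸ hy)

lemma exists_walk_to_first_mem {S : Set V} {a b : V} (p : G.Walk a b) (hb : b ∈ S) :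
    ∃ z ∈ S, ∃ q : G.Walk a z, q.support ⊆ p.support ∧
      ∀ x ∈ q.support, x ∈ S → x = z := by
  induction p with
  | nil => exact ⟨_, hb, nil, by simp, by simp⟩
  | @cons u v w huv p ih =>
    by_cases hu : u ∈ S
    · exact ⟨u, hu, nil, by simp, by simp⟩
    · obtain ⟨z, hz, q, hqp, hqS⟩ := ih hb
      refine ⟨z, hz, cons huv q,
        by simpa using List.Subset.trans hqp (List.subset_cons_self _ _), ?_⟩
      intro x hx hxS
      rcases List.mem_cons.mp (support_cons _ _ ▸ hx) with rfl | hx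
      · exact absurd hxS hu
      · exact hqS x hx hxS

lemma exists_fork {u b c : V} (X : G.Walk u b) (Y : G.Walk u c) :
    ∃ z, ∃ (s : G.Walk u z) (p : G.Walk z b) (q : G.Walk z c),
      s.IsPath ∧ p.IsPath ∧ q.IsPath ∧
      s.support ⊆ Y.support ∧ p.support ⊆ X.support ∧ q.support ⊆ Y.support ∧
      (∀ x ∈ s.support, x ∈ p.support → x = z) ∧
      (∀ x ∈ s.support, x ∈ q.support → x = z) ∧
      (∀ x ∈ p.support, x ∈ q.support → x = z) := by
  classical
  set Y' := Y.bypass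
  obtain ⟨z, hzY, r, hrX, hrY⟩ :=
    exists_walk_to_first_mem (S := {x | x ∈ Y'.support}) X.reverse Y'.start_mem_support
  have hY'Y : Y'.support ⊆ Y.support := Y.support_bypass_subset_support
  have hsq : ((Y'.takeUntil z hzY).append (Y'.dropUntil z hzY)).IsPath := by
    rw [Y'.take_spec hzY]; exact Y.bypass_isPath
  have hpr : r.reverse.bypass.support ⊆ r.support := fun x hx => by
    simpa using r.reverse.support_bypass_subset_support hx
  refine ⟨z, Y'.takeUntil z hzY, r.reverse.bypass, Y'.dropUntil z hzY,
    (Y.bypass_isPath.takeUntil hzY), r.reverse.bypass_isPath, (Y.bypass_isPath.dropUntil hzY),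
    List.Subset.trans (Y'.support_takeUntil_subset_support hzY) hY'Y, fun x hx => ?_,
    List.Subset.trans (Y'.support_dropUntil_subset_support hzY) hY'Y, fun x hs hp => ?_,
    fun x hs hq => ?_, fun x hp hq => ?_⟩
  · simpa using hrX (hpr hx)
  · exact hrY x (hpr hp) (Y'.support_takeUntil_subset_support hzY hs)
  · by_contra hxz
    exact hsq.ne_of_mem_support_of_append hxz hs hq rfl
  · exact hrY x (hpr hp) (Y'.support_dropUntil_subset_support hzY hq)

end SimpleGraph.Walk

namespace LinkedAvoiding

variable {V : Type} {G : SimpleGraph V} {S A B C : Set V}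

lemma symm (h : LinkedAvoiding G A B C) : LinkedAvoiding G B A C := by
  obtain ⟨a, ha, b, hb, p, hp⟩ := h
  exact ⟨b, hb, a, ha, p.reverse, fun x hx => hp x (by simpa using hx)⟩

lemma mono {C' : Set V} (h : LinkedAvoiding G A B C) (hC : C' ⊆ C) : LinkedAvoiding G A B C' := by
  obtain ⟨a, ha, b, hb, p, hp⟩ := h
  exact ⟨a, ha, b, hb, p, fun x hx hxC => hp x hx (hC hxC)⟩

lemma trans (h₁ : LinkedAvoiding G S A C) (hA : (G.induce A).Connected) (hAC : Disjoint A C)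
    (h₂ : LinkedAvoiding G A B C) : LinkedAvoiding G S B C := by
  obtain ⟨s, hs, a, ha, p, hp⟩ := h₁
  obtain ⟨a', ha', b, hb, q, hq⟩ := h₂
  obtain ⟨m⟩ := hA.preconnected ⟨a, ha⟩ ⟨a', ha'⟩
  have hm : ∀ x ∈ (m.map (Embedding.induce A).toHom).support, x ∈ A := by
    simp only [Walk.support_map, List.mem_map]
    rintro _ ⟨y, -, rfl⟩
    exact y.2
  let m' : G.Walk a a' := m.map (Embedding.induce A).toHom
  refine ⟨s, hs, b, hb, p.append (m'.append q), fun x hx => ?_⟩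
  rcases (Walk.mem_support_append_iff _ _).mp hx with hx | hx
  · exact hp x hx
  rcases (Walk.mem_support_append_iff _ _).mp hx with hx | hx
  · exact hAC.notMem_of_mem_left (hm x hx)
  · exact hq x hx

lemma exists_walk_to_first_mem {u : V} (h : LinkedAvoiding G {u} B C) :
    ∃ b ∈ B, ∃ p : G.Walk u b, (∀ x ∈ p.support, x ∉ C) ∧
      ∀ x ∈ p.support, x ∈ B → x = b := by
  obtain ⟨_, rfl, b, hb, p, hp⟩ := h
  obtain ⟨b', hb', q, hqp, hqB⟩ := p.exists_walk_to_first_mem hb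
  exact ⟨b', hb', q, fun x hx => hp x (hqp hx), hqB⟩

end LinkedAvoiding

namespace SubdivCopy

variable {α β V W : Type} {S : SimpleGraph β} {T : SimpleGraph α} {G : SimpleGraph V}
  {G' : SimpleGraph W}

def map (f : G ↪g G') (c : SubdivCopy T G) : SubdivCopy T G' where
  φ := f ∘ c.φ
  inj := f.injective.comp c.inj
  path _ _ h := (c.path h).map f.toHom
  isPath _ _ h := (c.isPath h).map f.injective
  branch _ _ h z hz := c.branch h z <| by
    simpa [Walk.support_map, f.injective.eq_iff] using hz
  disj _ _ _ _ h h' hne v hv hv' := by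
    rw [Walk.support_map, List.mem_map] at hv hv'
    obtain ⟨w, hw, rfl⟩ := hv
    obtain ⟨w', hw', hww'⟩ := hv'
    obtain ⟨z, hz, rfl⟩ := c.disj h h' hne w hw (f.injective hww' ▸ hw')
    exact ⟨z, hz, rfl⟩

lemma supp_map (f : G ↪g G') (c : SubdivCopy T G) : (c.map f).supp = f '' c.supp := by
  ext v
  simp only [supp, map, Set.image_union, Set.mem_union, Set.mem_range, Function.comp_apply,
    Set.mem_ofPred_eq, Walk.support_map, List.mem_map, Set.mem_image]
  aesop

def comap (f : S ↪g T) (c : SubdivCopy T G) : SubdivCopy S G where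
  φ := c.φ ∘ f
  inj := c.inj.comp f.injective
  path _ _ h := c.path (f.map_adj_iff.mpr h)
  isPath _ _ h := c.isPath _
  branch _ _ h z hz := by
    simpa only [f.injective.eq_iff] using c.branch _ (f z) hz
  disj x y x' y' h h' hne v hv hv' := by
    have hne' : ({f x, f y} : Set α) ≠ {f x', f y'} := by
      simpa only [← Set.image_pair, ne_eq, Set.image_eq_image f.injective] using hne
    obtain ⟨w, hw, rfl⟩ := c.disj _ _ hne' v hv hv'
    rw [← Set.image_pair, ← Set.image_pair, ← Set.image_inter f.injective] at hw
    obtain ⟨w, hw, rfl⟩ := hw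
    exact ⟨w, hw, rfl⟩

lemma supp_comap_subset (f : S ↪g T) (c : SubdivCopy T G) : (c.comap f).supp ⊆ c.supp := by
  rintro v (⟨x, rfl⟩ | ⟨x, y, h, hv⟩)
  · exact Or.inl ⟨f x, rfl⟩
  · exact Or.inr ⟨f x, f y, _, hv⟩

end SubdivCopy

structure StemmedCopy {α V : Type} (T : SimpleGraph α) (r : α) (G : SimpleGraph V) (u : V)
    extends SubdivCopy T G where
  stem : G.Walk u (φ r)
  isPath_stem : stem.IsPath
  stem_inter : ∀ x ∈ stem.support, x ∈ toSubdivCopy.supp → x = φ r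

namespace StemmedCopy

variable {α β V W : Type} {S : SimpleGraph β} {T : SimpleGraph α} {r : α} {G : SimpleGraph V}
  {G' : SimpleGraph W} {u : V}

def span (K : StemmedCopy T r G u) : Set V := K.supp ∪ {x | x ∈ K.stem.support}

lemma stem_subset_span (K : StemmedCopy T r G u) {x : V} (hx : x ∈ K.stem.support) :
    x ∈ K.span :=
  Or.inr hx

lemma supp_subset_span (K : StemmedCopy T r G u) : K.supp ⊆ K.span := Set.subset_union_left

lemma φ_mem_supp (K : StemmedCopy T r G u) (x : α) : K.φ x ∈ K.supp := Or.inl ⟨x, rfl⟩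

lemma path_support_subset_supp (K : StemmedCopy T r G u) {x y : α} (h : T.Adj x y) {v : V}
    (hv : v ∈ (K.path h).support) : v ∈ K.supp := Or.inr ⟨x, y, h, hv⟩

def ofSubsingleton [Subsingleton α] (u : V) : StemmedCopy T r G u where
  φ _ := u
  inj x y _ := Subsingleton.elim x y
  path x y h := (h.ne (Subsingleton.elim x y)).elim
  isPath x y h := (h.ne (Subsingleton.elim x y)).elim
  branch x y h := (h.ne (Subsingleton.elim x y)).elim
  disj x y _ _ h := (h.ne (Subsingleton.elim x y)).elim
  stem := .nil
  isPath_stem := .nil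
  stem_inter x hx _ := by simpa using hx

def map (f : G ↪g G') (K : StemmedCopy T r G u) : StemmedCopy T r G' (f u) where
  toSubdivCopy := K.toSubdivCopy.map f
  stem := K.stem.map f.toHom
  isPath_stem := K.isPath_stem.map f.injective
  stem_inter x hx hxK := by
    change x ∈ (K.stem.map f.toHom).support at hx
    rw [Walk.support_map, Embedding.coe_toHom, List.mem_map] at hx
    obtain ⟨y, hy, rfl⟩ := hx
    rw [SubdivCopy.supp_map, f.injective.mem_set_image] at hxK
    exact congrArg f (K.stem_inter y hy hxK)

lemma span_map (f : G ↪g G') (K : StemmedCopy T r G u) : (K.map f).span = f '' K.span := by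
  ext x
  change _ ∨ x ∈ (K.stem.map f.toHom).support ↔ _
  simp [span, map, SubdivCopy.supp_map, Walk.support_map, or_and_right, exists_or]

lemma exists_span_subset_of_induce {B : Set V} {b : V} (hb : b ∈ B)
    (K : StemmedCopy T r (G.induce B) ⟨b, hb⟩) :
    ∃ K' : StemmedCopy T r G b, K'.span ⊆ B := by
  refine ⟨K.map (Embedding.induce B), fun x hx => ?_⟩
  obtain ⟨y, -, rfl⟩ := (span_map (Embedding.induce B) K).subset hx
  exact y.2

def comap (f : S ↪g T) {s : β} (hs : f s = r) (K : StemmedCopy T r G u) :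
    StemmedCopy S s G u where
  toSubdivCopy := K.toSubdivCopy.comap f
  stem := K.stem.copy rfl (by simp [SubdivCopy.comap, hs])
  isPath_stem := (Walk.isPath_copy _ _ _).mpr K.isPath_stem
  stem_inter x hx hxK := by
    rw [Walk.support_copy] at hx
    simpa [SubdivCopy.comap, hs] using K.stem_inter x hx (K.supp_comap_subset f hxK)

def extendStem (K : StemmedCopy T r G u) {z : V} (p : G.Walk z u) (hp : p.IsPath)
    (hpK : ∀ x ∈ p.support, x ∈ K.span → x = u) : StemmedCopy T r G z where
  toSubdivCopy := K.toSubdivCopy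
  stem := p.append K.stem
  isPath_stem := hp.append K.isPath_stem fun x hx hxK => hpK x hx (K.stem_subset_span hxK)
  stem_inter x hx hxK := by
    rcases (Walk.mem_support_append_iff _ _).mp hx with hx | hx
    · obtain rfl := hpK x hx (K.supp_subset_span hxK)
      exact K.stem_inter x K.stem.start_mem_support hxK
    · exact K.stem_inter x hx hxK

lemma span_extendStem (K : StemmedCopy T r G u) {z : V} (p : G.Walk z u) (hp : p.IsPath)
    (hpK : ∀ x ∈ p.support, x ∈ K.span → x = u) :
    (K.extendStem p hp hpK).span = K.span ∪ {x | x ∈ p.support} := by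
  ext x
  simp only [span, extendStem, Set.mem_union, Set.mem_ofPred_eq, Walk.mem_support_append_iff]
  tauto

end StemmedCopy

/-- A new root `none` joined to the root `r` of two copies of `T`, indexed by `Bool`. -/
def binaryJoin {α : Type} (T : SimpleGraph α) (r : α) : SimpleGraph (Option (Bool × α)) where
  Adj
    | none, none => False
    | none, some (_, x) => x = r
    | some (_, x), none => x = r
    | some (d, x), some (e, y) => d = e ∧ T.Adj x y
  symm := ⟨by
    rintro (_ | ⟨d, x⟩) (_ | ⟨e, y⟩) h
    all_goals simp_all [T.adj_comm]⟩
  loopless := ⟨by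
    rintro (_ | ⟨d, x⟩) h
    all_goals simp_all⟩

namespace StemmedCopy

variable {α V : Type} {T : SimpleGraph α} {r : α} {G : SimpleGraph V} {z : V}
  (K : Bool → StemmedCopy T r G z)

def joinφ : Option (Bool × α) → V
  | none => z
  | some (d, x) => (K d).φ x

def joinPath : ∀ {a b : Option (Bool × α)}, (binaryJoin T r).Adj a b →
    G.Walk (joinφ K a) (joinφ K b)
  | none, some (d, _), rfl => (K d).stem
  | some (d, _), none, rfl => (K d).stem.reverse
  | some (d, _), some (_, _), ⟨rfl, h⟩ => (K d).path h

lemma joinPath_isPath {a b : Option (Bool × α)} (h : (binaryJoin T r).Adj a b) :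
    (joinPath K h).IsPath := by
  match a, b, h with
  | none, some (d, _), rfl => exact (K d).isPath_stem
  | some (d, _), none, rfl => exact (K d).isPath_stem.reverse
  | some (d, _), some (_, _), ⟨rfl, h⟩ => exact (K d).isPath h

lemma joinPath_cases {a b : Option (Bool × α)} (h : (binaryJoin T r).Adj a b) :
    (∃ d, ({a, b} : Set _) = {none, some (d, r)} ∧
      ∀ v ∈ (joinPath K h).support, v ∈ (K d).stem.support) ∨
    ∃ d x y, ∃ h' : T.Adj x y, ({a, b} : Set _) = {some (d, x), some (d, y)} ∧
      ∀ v ∈ (joinPath K h).support, v ∈ ((K d).path h').support := by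
  match a, b, h with
  | none, some (d, _), rfl => exact Or.inl ⟨d, rfl, fun v hv => hv⟩
  | some (d, _), none, rfl =>
    exact Or.inl ⟨d, Set.pair_comm _ _,
      fun v hv => List.mem_reverse.mp (Walk.support_reverse _ ▸ hv)⟩
  | some (d, _), some (_, _), ⟨rfl, h⟩ => exact Or.inr ⟨d, _, _, h, rfl, fun v hv => hv⟩

structure Joinable : Prop where
  span_inter : ∀ x ∈ (K false).span, x ∈ (K true).span → x = z
  φ_root_ne : ∀ d, (K d).φ r ≠ z

namespace Joinable

variable {K}

lemma z_notMem_supp (hK : Joinable K) (d : Bool) : z ∉ (K d).supp := fun hzK =>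
  hK.φ_root_ne d ((K d).stem_inter z (K d).stem.start_mem_support hzK).symm

lemma eq_of_mem_span (hK : Joinable K) {d e : Bool} (hde : d ≠ e) {v : V} (hd : v ∈ (K d).span)
    (he : v ∈ (K e).span) : v = z := by
  cases d <;> cases e
  all_goals first | exact absurd rfl hde | exact hK.span_inter v hd he | exact hK.span_inter v he hd

lemma eq_of_mem_supp_of_mem_span (hK : Joinable K) {d e : Bool} {v : V} (hd : v ∈ (K d).supp)
    (he : v ∈ (K e).span) : d = e := by
  by_contra hde
  exact hK.z_notMem_supp d (hK.eq_of_mem_span hde ((K d).supp_subset_span hd) he ▸ hd)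

lemma φ_ne (hK : Joinable K) (d : Bool) (x : α) : (K d).φ x ≠ z := fun h =>
  hK.z_notMem_supp d ((congrArg (· ∈ (K d).supp) h).mp ((K d).φ_mem_supp x))

lemma joinφ_injective (hK : Joinable K) : Function.Injective (joinφ K) := by
  rintro (_ | ⟨d, x⟩) (_ | ⟨e, y⟩) hxy
  · rfl
  · exact (hK.φ_ne e y (Eq.symm hxy)).elim
  · exact (hK.φ_ne d x hxy).elim
  · change (K d).φ x = (K e).φ y at hxy
    obtain rfl := hK.eq_of_mem_supp_of_mem_span ((K d).φ_mem_supp x)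
      (hxy ▸ (K e).supp_subset_span ((K e).φ_mem_supp y))
    rw [(K d).inj hxy]

lemma joinPath_branch (hK : Joinable K) {a b : Option (Bool × α)} (h : (binaryJoin T r).Adj a b)
    (w : Option (Bool × α)) (hw : joinφ K w ∈ (joinPath K h).support) : w = a ∨ w = b := by
  suffices w ∈ ({a, b} : Set _) by simpa using this
  rcases joinPath_cases K h with ⟨d, hab, hsub⟩ | ⟨d, x, y, h', hab, hsub⟩ <;> rw [hab]
  · rcases w with _ | ⟨e, x⟩
    · simp
    · have hx : (K e).φ x ∈ (K d).stem.support := hsub _ hw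
      obtain rfl := hK.eq_of_mem_supp_of_mem_span ((K e).φ_mem_supp x) ((K d).stem_subset_span hx)
      simp [(K e).inj ((K e).stem_inter _ hx ((K e).φ_mem_supp x))]
  · rcases w with _ | ⟨e, w⟩
    · exact absurd ((K d).path_support_subset_supp h' (hsub _ hw)) (hK.z_notMem_supp d)
    · have hw : (K e).φ w ∈ ((K d).path h').support := hsub _ hw
      obtain rfl := hK.eq_of_mem_supp_of_mem_span ((K e).φ_mem_supp w)
        ((K d).supp_subset_span ((K d).path_support_subset_supp h' hw))
      rcases (K e).branch h' w hw with rfl | rfl <;> simp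

lemma eq_of_mem_stem_of_mem_path (hK : Joinable K) {d e : Bool} {x y : α} (h : T.Adj x y) {v : V}
    (hd : v ∈ (K d).stem.support) (he : v ∈ ((K e).path h).support) :
    e = d ∧ v = (K d).φ r ∧ (r = x ∨ r = y) := by
  obtain rfl := hK.eq_of_mem_supp_of_mem_span ((K e).path_support_subset_supp h he)
    ((K d).stem_subset_span hd)
  obtain rfl := (K e).stem_inter v hd ((K e).path_support_subset_supp h he)
  exact ⟨rfl, rfl, (K e).branch h r he⟩

lemma joinPath_disj (hK : Joinable K) {a b a' b' : Option (Bool × α)}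
    (h : (binaryJoin T r).Adj a b) (h' : (binaryJoin T r).Adj a' b')
    (hne : ({a, b} : Set _) ≠ {a', b'}) (v : V) (hv : v ∈ (joinPath K h).support)
    (hv' : v ∈ (joinPath K h').support) : v ∈ joinφ K '' (({a, b} : Set _) ∩ {a', b'}) := by
  rcases joinPath_cases K h with ⟨d, hab, hsub⟩ | ⟨d, x, y, hxy, hab, hsub⟩ <;>
  rcases joinPath_cases K h' with ⟨d', hab', hsub'⟩ | ⟨d', x', y', hxy', hab', hsub'⟩ <;>
  rw [hab, hab'] at hne ⊢ <;> replace hv := hsub v hv <;> replace hv' := hsub' v hv'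
  · have hdd : d ≠ d' := by rintro rfl; exact hne rfl
    refine ⟨none, by simp, ?_⟩
    exact (hK.eq_of_mem_span hdd ((K d).stem_subset_span hv) ((K d').stem_subset_span hv')).symm
  · obtain ⟨rfl, rfl, hr⟩ := hK.eq_of_mem_stem_of_mem_path hxy' hv hv'
    exact ⟨some (d', r), by rcases hr with rfl | rfl <;> simp, rfl⟩
  · obtain ⟨rfl, rfl, hr⟩ := hK.eq_of_mem_stem_of_mem_path hxy hv' hv
    exact ⟨some (d, r), by rcases hr with rfl | rfl <;> simp, rfl⟩
  · obtain rfl := hK.eq_of_mem_supp_of_mem_span ((K d).path_support_subset_supp hxy hv)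
      ((K d').supp_subset_span ((K d').path_support_subset_supp hxy' hv'))
    have hne' : ({x, y} : Set α) ≠ {x', y'} := by
      intro heq
      apply hne
      simp only [← Set.image_pair (fun x => some (d, x)), heq]
    obtain ⟨w, hw, rfl⟩ := (K d).disj hxy hxy' hne' v hv hv'
    exact ⟨some (d, w), by simpa using hw, rfl⟩

end Joinable

variable {K}

def joinCopy (hK : Joinable K) : SubdivCopy (binaryJoin T r) G where
  φ := joinφ K
  inj := hK.joinφ_injective
  path _ _ h := joinPath K h
  isPath _ _ h := joinPath_isPath K h
  branch _ _ h := hK.joinPath_branch h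
  disj _ _ _ _ h h' := hK.joinPath_disj h h'

lemma supp_joinCopy_subset (hK : Joinable K) : (joinCopy hK).supp ⊆ ⋃ d, (K d).span := by
  rintro v (⟨_ | ⟨d, x⟩, rfl⟩ | ⟨a, b, h, hv⟩)
  · exact Set.mem_iUnion_of_mem false ((K false).stem_subset_span (K false).stem.start_mem_support)
  · exact Set.mem_iUnion_of_mem d ((K d).supp_subset_span ((K d).φ_mem_supp x))
  · rcases joinPath_cases K h with ⟨d, -, hsub⟩ | ⟨d, x, y, hxy, -, hsub⟩
    · exact Set.mem_iUnion_of_mem d ((K d).stem_subset_span (hsub v hv))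
    · exact Set.mem_iUnion_of_mem d
        ((K d).supp_subset_span ((K d).path_support_subset_supp hxy (hsub v hv)))

def join (hK : Joinable K) {u : V} (s : G.Walk u z) (hs : s.IsPath)
    (hsK : ∀ x ∈ s.support, x ∈ ⋃ d, (K d).span → x = z) :
    StemmedCopy (binaryJoin T r) none G u where
  toSubdivCopy := joinCopy hK
  stem := s
  isPath_stem := hs
  stem_inter x hx hxK := hsK x hx (supp_joinCopy_subset hK hxK)

end StemmedCopy

-- Children prepend a letter, so the two subtrees below the root of `CBT (h + 1)` consist of the
-- strings ending in `false` and in `true` respectively.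
def cbtSnoc (h : ℕ) :
    Option (Bool × {l : List Bool // l.length ≤ h}) → {l : List Bool // l.length ≤ h + 1}
  | none => CBTroot (h + 1)
  | some (d, x) => ⟨x.1 ++ [d], by simpa using x.2⟩

lemma cbtSnoc_bijective (h : ℕ) : Function.Bijective (cbtSnoc h) := by
  refine ⟨?_, fun x => ?_⟩
  · rintro (_ | ⟨d, x⟩) (_ | ⟨e, y⟩) hxy
    all_goals simp_all [cbtSnoc, CBTroot, Subtype.ext_iff, List.append_singleton_inj]
  · rcases List.eq_nil_or_concat' x.1 with hx | ⟨l, d, hx⟩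
    · exact ⟨none, Subtype.ext hx.symm⟩
    · refine ⟨some (d, ⟨l, ?_⟩), Subtype.ext hx.symm⟩
      have := x.2
      simp_all

noncomputable def binaryJoinIsoCBT (h : ℕ) : binaryJoin (CBT h) (CBTroot h) ≃g CBT (h + 1) where
  toEquiv := Equiv.ofBijective _ (cbtSnoc_bijective h)
  map_rel_iff' := by
    rintro (_ | ⟨d, x⟩) (_ | ⟨e, y⟩)
    all_goals
      simp [CBT, binaryJoin, cbtSnoc, CBTroot, Subtype.ext_iff, List.append_eq_cons_iff] <;> grind

instance : Subsingleton {l : List Bool // l.length ≤ 0} :=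
  ⟨fun x y => Subtype.ext <| (List.length_eq_zero_iff.mp (Nat.le_zero.mp x.2)).trans
    (List.length_eq_zero_iff.mp (Nat.le_zero.mp y.2)).symm⟩

section Step

variable {α V : Type} {T : SimpleGraph α} {r : α} {G : SimpleGraph V}

lemma nonempty_stemmedCopy_binaryJoin {A B C : Set V}
    (hB : ∀ b ∈ B, ∃ K : StemmedCopy T r G b, K.span ⊆ B)
    (hC : ∀ c ∈ C, ∃ K : StemmedCopy T r G c, K.span ⊆ C)
    (hA : (G.induce A).Connected) (hAB : Disjoint A B) (hAC : Disjoint A C) (hBC : Disjoint B C)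
    (LB : LinkedAvoiding G A B C) (LC : LinkedAvoiding G A C B) {u : V}
    (hu : LinkedAvoiding G {u} A (B ∪ C)) :
    Nonempty (StemmedCopy (binaryJoin T r) none G u) := by
  obtain ⟨b, hb, X, hXC, hXB⟩ :=
    ((hu.mono Set.subset_union_right).trans hA hAC LB).exists_walk_to_first_mem
  obtain ⟨c, hc, Y, hYB, hYC⟩ :=
    ((hu.mono Set.subset_union_left).trans hA hAB LC).exists_walk_to_first_mem
  obtain ⟨z, s, p, q, hs, hp, hq, hsY, hpX, hqY, hsp, hsq, hpq⟩ := X.exists_fork Y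
  obtain ⟨K₂, hK₂⟩ := hB b hb
  obtain ⟨K₃, hK₃⟩ := hC c hc
  have hpK₂ : ∀ x ∈ p.support, x ∈ K₂.span → x = b :=
    fun x hx hxK => hXB x (hpX hx) (hK₂ hxK)
  have hqK₃ : ∀ x ∈ q.support, x ∈ K₃.span → x = c :=
    fun x hx hxK => hYC x (hqY hx) (hK₃ hxK)
  let K : Bool → StemmedCopy T r G z := fun d =>
    bif d then K₃.extendStem q hq hqK₃ else K₂.extendStem p hp hpK₂
  have hKf : ∀ x ∈ (K false).span, x ∈ B ∨ x ∈ p.support := fun x hx =>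
    ((K₂.span_extendStem p hp hpK₂).subset hx).imp (fun hx => hK₂ hx) id
  have hKt : ∀ x ∈ (K true).span, x ∈ C ∨ x ∈ q.support := fun x hx =>
    ((K₃.span_extendStem q hq hqK₃).subset hx).imp (fun hx => hK₃ hx) id
  have hK : StemmedCopy.Joinable K := by
    refine ⟨fun x hxf hxt => ?_, fun d => ?_⟩
    · rcases hKf x hxf with hxB | hxp <;> rcases hKt x hxt with hxC | hxq
      · exact (hBC.notMem_of_mem_left hxB hxC).elim
      · exact (hYB x (hqY hxq) hxB).elim
      · exact (hXC x (hpX hxp) hxC).elim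
      · exact hpq x hxp hxq
    · have hzB : z ∉ B := hYB z (hsY s.end_mem_support)
      have hzC : z ∉ C := hXC z (hpX p.start_mem_support)
      cases d
      · exact fun h => hzB (h ▸ hK₂ (K₂.supp_subset_span (K₂.φ_mem_supp r)))
      · exact fun h => hzC (h ▸ hK₃ (K₃.supp_subset_span (K₃.φ_mem_supp r)))
  refine ⟨StemmedCopy.join hK s hs fun x hxs hxK => ?_⟩
  obtain ⟨d, hxd⟩ := Set.mem_iUnion.mp hxK
  cases d
  · rcases hKf x hxd with hxB | hxp
    · exact (hYB x (hsY hxs) hxB).elim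
    · exact hsp x hxs hxp
  · rcases hKt x hxd with hxC | hxq
    · obtain rfl := hYC x (hsY hxs) hxC
      exact hsq x hxs q.end_mem_support
    · exact hsq x hxs hxq

end Step

lemma InT.connected {h : ℕ} {V : Type} {G : SimpleGraph V} (hG : InT h G) : G.Connected := by
  cases h
  exacts [hG, hG.1]

lemma linkedAvoiding_singleton_of_connected {V : Type} {G : SimpleGraph V} (hG : G.Connected)
    {A B C : Set V} (hAB : Disjoint A B) (hAC : Disjoint A C) (hBC : Disjoint B C)
    (hA : A.Nonempty) (u : V) :
    LinkedAvoiding G {u} A (B ∪ C) ∨ LinkedAvoiding G {u} B (A ∪ C) ∨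
      LinkedAvoiding G {u} C (A ∪ B) := by
  obtain ⟨a, ha⟩ := hA
  obtain ⟨p⟩ := hG.preconnected u a
  obtain ⟨w, hw, q, -, hq⟩ :=
    p.exists_walk_to_first_mem (S := A ∪ B ∪ C) (Or.inl (Or.inl ha))
  have link {S R : Set V} (hwS : w ∈ S) (hSR : Disjoint S R) (hR : R ⊆ A ∪ B ∪ C) :
      LinkedAvoiding G {u} S R :=
    ⟨u, rfl, w, hwS, q, fun x hx hxR => hSR.notMem_of_mem_left (hq x hx (hR hxR) ▸ hwS) hxR⟩
  rcases hw with (hw | hw) | hw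
  · exact Or.inl (link hw (hAB.union_right hAC) (by tauto_set))
  · exact Or.inr (Or.inl (link hw (hAB.symm.union_right hBC) (by tauto_set)))
  · exact Or.inr (Or.inr (link hw (hAC.symm.union_right hBC.symm) (by tauto_set)))

theorem InT.nonempty_stemmedCopy {h : ℕ} {V : Type} {G : SimpleGraph V} (hG : InT h G) (u : V) :
    Nonempty (StemmedCopy (CBT h) (CBTroot h) G u) := by
  induction h generalizing V with
  | zero => exact ⟨.ofSubsingleton u⟩
  | succ h ih =>
    obtain ⟨hconn, V₁, V₂, V₃, h₁₂, h₁₃, h₂₃, hV₁, hV₂, hV₃, L₁₂, L₁₃, L₂₃⟩ := hG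
    have ih' (S : Set V) (hS : InT h (G.induce S)) (b : V) (hb : b ∈ S) :
        ∃ K : StemmedCopy (CBT h) (CBTroot h) G b, K.span ⊆ S :=
      StemmedCopy.exists_span_subset_of_induce hb (ih hS ⟨b, hb⟩).some
    suffices Nonempty (StemmedCopy (binaryJoin (CBT h) (CBTroot h)) none G u) from
      this.map (StemmedCopy.comap (binaryJoinIsoCBT h).symm.toEmbedding
        ((binaryJoinIsoCBT h).symm_apply_eq.mpr rfl))
    rcases linkedAvoiding_singleton_of_connected hconn h₁₂ h₁₃ h₂₃
      (Set.nonempty_coe_sort.mp (InT.connected hV₁).nonempty) u with hu | hu | hu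
    · exact nonempty_stemmedCopy_binaryJoin (ih' _ hV₂) (ih' _ hV₃) (InT.connected hV₁)
        h₁₂ h₁₃ h₂₃ L₁₂ L₁₃ hu
    · exact nonempty_stemmedCopy_binaryJoin (ih' _ hV₁) (ih' _ hV₃) (InT.connected hV₂)
        h₁₂.symm h₂₃ h₁₃ L₁₂.symm L₂₃ hu
    · exact nonempty_stemmedCopy_binaryJoin (ih' _ hV₁) (ih' _ hV₂) (InT.connected hV₃)
        h₁₃.symm h₂₃.symm h₁₂ L₁₃.symm L₂₃.symm hu

theorem stmt2 {V : Type} (G : SimpleGraph V) (h : ℕ) (hG : InT h G) :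
    ContainsSubdiv (CBT h) G := by
  obtain ⟨u⟩ := hG.connected.nonempty
  obtain ⟨K⟩ := hG.nonempty_stemmedCopy u
  exact ⟨K.toSubdivCopy⟩
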